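/- Every element of the discrete Heisenberg group H expressible as a product of k generators from {x, x^{-1}, y, y^{-1}} is an upper unitriangular matrix with |a| ≤ k, |b| ≤ k, and |c| ≤ k^2/2, where a, b, c are the (1,2), (2,3), (1,3) entries respectively. -/

import Mathlib

@[ext]
structure Heis (R : Type*) [CommRing R] where
  a : R
  b : R
  c : R

namespace Heis
variable {R : Type*} [CommRing R]

instance : One (Heis R) := ⟨⟨0, 0, 0⟩⟩
instance : Mul (Heis R) := ⟨fun p q => ⟨p.a + q.a, p.b + q.b, p.c + q.c + p.a * q.b⟩⟩
instance : Inv (Heis R) := ⟨fun p => ⟨-p.a, -p.b, -p.c + p.a * p.b⟩⟩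

theorem mul_def (p q : Heis R) :
    p * q = ⟨p.a + q.a, p.b + q.b, p.c + q.c + p.a * q.b⟩ := rfl
theorem one_def : (1 : Heis R) = ⟨0, 0, 0⟩ := rfl
theorem inv_def (p : Heis R) : p⁻¹ = ⟨-p.a, -p.b, -p.c + p.a * p.b⟩ := rfl

instance : Group (Heis R) where
  mul_assoc p q r := by ext <;> simp [mul_def] <;> ring
  one_mul p := by ext <;> simp [mul_def, one_def]
  mul_one p := by ext <;> simp [mul_def, one_def]
  inv_mul_cancel p := by ext <;> simp [mul_def, one_def, inv_def]

/-- generator x -/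
def xgen : Heis R := ⟨1, 0, 0⟩
/-- generator y -/
def ygen : Heis R := ⟨0, 1, 0⟩

end Heis

/-! The entries `a` and `b` are additive along a word. Multiplying a word of length `n` on the
left by a generator adds the generator's `a`-entry (at most `1` in absolute value) times the
word's `b`-entry (at most `n`) to `c`; since `n ^ 2 + 2 * n ≤ (n + 1) ^ 2`, induction gives
`2 * |c| ≤ n ^ 2`. -/

theorem List.abs_sum_le_length_nsmul {G : Type*} [AddCommGroup G] [LinearOrder G]
    [IsOrderedAddMonoid G] (l : List G) (c : G) (h : ∀ x ∈ l, |x| ≤ c) :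
    |l.sum| ≤ l.length • c := by
  rw [← Multiset.sum_coe, ← Multiset.coe_card]
  refine Multiset.abs_sum_le_sum_abs.trans (Multiset.sum_le_card_nsmul _ c ?_) |>.trans_eq ?_
  · simpa using h
  · simp

namespace Heis

section CommRing

variable {R : Type*} [CommRing R]

theorem a_list_prod (l : List (Heis R)) : l.prod.a = (l.map a).sum := by
  induction l with
  | nil => rfl
  | cons g l ih => simp [mul_def, ih]

theorem b_list_prod (l : List (Heis R)) : l.prod.b = (l.map b).sum := by
  induction l with
  | nil => rfl
  | cons g l ih => simp [mul_def, ih]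

end CommRing

variable {R : Type*} [CommRing R] [LinearOrder R] [IsStrictOrderedRing R]

theorem abs_list_prod_a_le (l : List (Heis R)) (h : ∀ g ∈ l, |g.a| ≤ 1) :
    |l.prod.a| ≤ l.length := by
  simpa [a_list_prod] using (l.map a).abs_sum_le_length_nsmul 1 (by simpa using h)

theorem abs_list_prod_b_le (l : List (Heis R)) (h : ∀ g ∈ l, |g.b| ≤ 1) :
    |l.prod.b| ≤ l.length := by
  simpa [b_list_prod] using (l.map b).abs_sum_le_length_nsmul 1 (by simpa using h)

theorem two_mul_abs_list_prod_c_le (l : List (Heis R)) (ha : ∀ g ∈ l, |g.a| ≤ 1)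
    (hb : ∀ g ∈ l, |g.b| ≤ 1) (hc : ∀ g ∈ l, g.c = 0) :
    2 * |l.prod.c| ≤ (l.length : R) ^ 2 := by
  induction l with
  | nil => simp [one_def]
  | cons g l ih =>
    simp only [List.forall_mem_cons] at ha hb hc
    have hc_tail := ih ha.2 hb.2 hc.2
    have hb_tail := abs_list_prod_b_le l hb.2
    rw [List.prod_cons, mul_def, hc.1, zero_add, List.length_cons]
    calc 2 * |l.prod.c + g.a * l.prod.b|
        ≤ 2 * |l.prod.c| + 2 * (|g.a| * |l.prod.b|) := by
          linarith [abs_add_le l.prod.c (g.a * l.prod.b), abs_mul g.a l.prod.b]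
      _ ≤ l.length ^ 2 + 2 * (1 * l.length) := by gcongr; exact ha.1
      _ ≤ ((l.length + 1 : ℕ) : R) ^ 2 := by push_cast; nlinarith

theorem abs_entries_le_of_generator {g : Heis R}
    (hg : g = xgen ∨ g = xgen⁻¹ ∨ g = ygen ∨ g = ygen⁻¹) :
    |g.a| ≤ 1 ∧ |g.b| ≤ 1 ∧ g.c = 0 := by
  rcases hg with rfl | rfl | rfl | rfl <;> simp [xgen, ygen, inv_def]

end Heis

theorem heisenberg_word_entry_bounds (k : ℕ) (l : List (Heis ℤ))
    (hlen : l.length = k)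
    (hmem : ∀ g ∈ l, g = Heis.xgen ∨ g = Heis.xgen⁻¹ ∨ g = Heis.ygen ∨ g = Heis.ygen⁻¹) :
    |l.prod.a| ≤ (k : ℤ) ∧ |l.prod.b| ≤ (k : ℤ) ∧
      |(l.prod.c : ℚ)| ≤ (k : ℚ) ^ 2 / 2 := by
  subst hlen
  choose ha hb hc using fun g hg => Heis.abs_entries_le_of_generator (hmem g hg)
  refine ⟨Heis.abs_list_prod_a_le l ha, Heis.abs_list_prod_b_le l hb, ?_⟩
  have h2c := Heis.two_mul_abs_list_prod_c_le l ha hb hc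
  rw [le_div_iff₀ two_pos, mul_comm]
  exact_mod_cast h2c
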